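/- arXiv:2601.17392 — 5 statements merged into one kernel-verified Lean document; each statement's English description precedes it below -/
import Mathlib

section
/- For all positive semidefinite P, Q ∈ ℝ^{d×d}: 𝓔(Q) = 𝓔(P) (I + (P − Q) 𝓕(Q)) and Φ(P) − Φ(Q) = 𝓔(P) (P − Q) 𝓔(Q)ᵀ. -/
/-!
With `M = 1 + P S` and `N = 1 + Q S`, both identities are resolvent identities:
`1 + (P - Q) S N⁻¹ = (N + (P - Q) S) N⁻¹ = M N⁻¹`, and, by the push-through identity
`N⁻¹ Q = Q (1 + S Q)⁻¹`,
`M⁻¹ P - N⁻¹ Q = M⁻¹ (P (1 + S Q) - M Q) (1 + S Q)⁻¹ = M⁻¹ (P - Q) (1 + S Q)⁻¹`,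
where `(1 + S Q)⁻¹ = (N⁻¹)ᵀ` since `S` and `Q` are symmetric. The inverses are genuine
because writing `S = Cᴴ C` gives `det (1 + P S) = det (1 + C P Cᴴ) > 0`.
-/

open Matrix

open scoped MatrixOrder ComplexOrder

namespace Matrix

section Resolvent

variable {n α : Type*} [Fintype n] [DecidableEq n] [CommRing α] {P Q S : Matrix n n α}

lemma inv_one_add_mul_mul_self (hQ : IsUnit (1 + Q * S).det) :
    (1 + Q * S)⁻¹ * Q = Q * (1 + S * Q)⁻¹ := by
  have hQ' : IsUnit (1 + S * Q).det := by rwa [det_one_add_mul_comm] at hQ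
  have push : Q * (1 + S * Q) = (1 + Q * S) * Q := by noncomm_ring
  calc (1 + Q * S)⁻¹ * Q = (1 + Q * S)⁻¹ * Q * (1 + S * Q) * (1 + S * Q)⁻¹ :=
        (mul_nonsing_inv_cancel_right (A := 1 + S * Q) _ hQ').symm
    _ = (1 + Q * S)⁻¹ * ((1 + Q * S) * Q) * (1 + S * Q)⁻¹ := by
        rw [Matrix.mul_assoc _ Q, push]
    _ = Q * (1 + S * Q)⁻¹ := by rw [nonsing_inv_mul_cancel_left (A := 1 + Q * S) _ hQ]

lemma inv_one_add_mul_eq_inv_one_add_mul_mul (hP : IsUnit (1 + P * S).det)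
    (hQ : IsUnit (1 + Q * S).det) :
    (1 + Q * S)⁻¹ = (1 + P * S)⁻¹ * (1 + (P - Q) * (S * (1 + Q * S)⁻¹)) := by
  have : 1 + (P - Q) * (S * (1 + Q * S)⁻¹) = (1 + P * S) * (1 + Q * S)⁻¹ :=
    calc 1 + (P - Q) * (S * (1 + Q * S)⁻¹) = (1 + Q * S + (P - Q) * S) * (1 + Q * S)⁻¹ := by
          rw [Matrix.add_mul, mul_nonsing_inv _ hQ, Matrix.mul_assoc]
      _ = (1 + P * S) * (1 + Q * S)⁻¹ := by congr 1; noncomm_ring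
  rw [this, nonsing_inv_mul_cancel_left (A := 1 + P * S) _ hP]

lemma inv_one_add_mul_mul_sub (hP : IsUnit (1 + P * S).det) (hQ : IsUnit (1 + Q * S).det) :
    (1 + P * S)⁻¹ * P - (1 + Q * S)⁻¹ * Q = (1 + P * S)⁻¹ * (P - Q) * (1 + S * Q)⁻¹ := by
  have hQ' : IsUnit (1 + S * Q).det := by rwa [det_one_add_mul_comm] at hQ
  have : P - Q = P * (1 + S * Q) - (1 + P * S) * Q := by noncomm_ring
  rw [this, Matrix.mul_sub, Matrix.sub_mul, ← Matrix.mul_assoc _ P,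
    mul_nonsing_inv_cancel_right (A := 1 + S * Q) _ hQ',
    nonsing_inv_mul_cancel_left (A := 1 + P * S) _ hP, inv_one_add_mul_mul_self hQ]

lemma transpose_inv_one_add_mul (hS : S.IsSymm) (hQ : Q.IsSymm) :
    ((1 + Q * S)⁻¹)ᵀ = (1 + S * Q)⁻¹ := by
  rw [transpose_nonsing_inv, transpose_add, transpose_one, transpose_mul, hS.eq, hQ.eq]

end Resolvent

lemma isUnit_det_one_add_mul_of_posSemidef {n 𝕜 : Type*} [Fintype n] [DecidableEq n] [RCLike 𝕜]
    {X S : Matrix n n 𝕜} (hX : X.PosSemidef) (hS : S.PosSemidef) : IsUnit (1 + X * S).det := by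
  obtain ⟨C, rfl⟩ := CStarAlgebra.nonneg_iff_eq_star_mul_self.mp hS.nonneg
  rw [star_eq_conjTranspose, ← Matrix.mul_assoc, det_one_add_mul_comm, ← Matrix.mul_assoc]
  exact (isUnit_iff_isUnit_det _).mp
    (PosDef.one.add_posSemidef (hX.mul_mul_conjTranspose_same C)).isUnit

end Matrix

theorem statement3_general {d d₀ : ℕ}
    (A : Matrix (Fin d) (Fin d) ℝ) (B : Matrix (Fin d₀) (Fin d) ℝ)
    (R : Matrix (Fin d) (Fin d) ℝ) (R₀ : Matrix (Fin d₀) (Fin d₀) ℝ)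
    (hR₀ : R₀.PosDef)
    (S : Matrix (Fin d) (Fin d) ℝ) (hSdef : S = Bᵀ * R₀⁻¹ * B)
    (Φ E F : Matrix (Fin d) (Fin d) ℝ → Matrix (Fin d) (Fin d) ℝ)
    (hΦ : ∀ P, Φ P = A * (1 + P * S)⁻¹ * P * Aᵀ + R)
    (hE : ∀ P, E P = A * (1 + P * S)⁻¹)
    (hF : ∀ P, F P = S * (1 + P * S)⁻¹)
    (P Q : Matrix (Fin d) (Fin d) ℝ) (hP : P.PosSemidef) (hQ : Q.PosSemidef) :
    E Q = E P * (1 + (P - Q) * F Q) ∧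
    Φ P - Φ Q = E P * (P - Q) * (E Q)ᵀ := by
  have hS : S.PosSemidef := by
    simpa [hSdef] using hR₀.inv.posSemidef.conjTranspose_mul_mul_same B
  have hPS := isUnit_det_one_add_mul_of_posSemidef hP hS
  have hQS := isUnit_det_one_add_mul_of_posSemidef hQ hS
  refine ⟨?_, ?_⟩
  · rw [hE, hE, hF, Matrix.mul_assoc, ← inv_one_add_mul_eq_inv_one_add_mul_mul hPS hQS]
  · calc Φ P - Φ Q = A * ((1 + P * S)⁻¹ * P - (1 + Q * S)⁻¹ * Q) * Aᵀ := by
          rw [hΦ, hΦ]; noncomm_ring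
      _ = E P * (P - Q) * (E Q)ᵀ := by
          rw [inv_one_add_mul_mul_sub hPS hQS, hE, hE, transpose_mul,
            transpose_inv_one_add_mul
            (isHermitian_iff_isSymm.mp hS.isHermitian) (isHermitian_iff_isSymm.mp hQ.isHermitian)]
          noncomm_ring

/-- With `S := Bᵀ R₀⁻¹ B`, `Φ(P) := A (I + P S)⁻¹ P Aᵀ + R`,
`𝓔(P) := A (I + P S)⁻¹` and `𝓕(P) := S (I + P S)⁻¹`, for all positive semidefinite
`P, Q`: `𝓔(Q) = 𝓔(P) (I + (P − Q) 𝓕(Q))` and `Φ(P) − Φ(Q) = 𝓔(P) (P − Q) 𝓔(Q)ᵀ`. -/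
theorem statement3 {d d₀ : ℕ} (hd : 1 ≤ d) (hd₀ : 1 ≤ d₀)
    (A : Matrix (Fin d) (Fin d) ℝ) (B : Matrix (Fin d₀) (Fin d) ℝ)
    (R : Matrix (Fin d) (Fin d) ℝ) (R₀ : Matrix (Fin d₀) (Fin d₀) ℝ)
    (hR : R.PosDef) (hR₀ : R₀.PosDef)
    (S : Matrix (Fin d) (Fin d) ℝ) (hSdef : S = Bᵀ * R₀⁻¹ * B)
    (Φ E F : Matrix (Fin d) (Fin d) ℝ → Matrix (Fin d) (Fin d) ℝ)
    (hΦ : ∀ P, Φ P = A * (1 + P * S)⁻¹ * P * Aᵀ + R)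
    (hE : ∀ P, E P = A * (1 + P * S)⁻¹)
    (hF : ∀ P, F P = S * (1 + P * S)⁻¹)
    (P Q : Matrix (Fin d) (Fin d) ℝ) (hP : P.PosSemidef) (hQ : Q.PosSemidef) :
    E Q = E P * (1 + (P - Q) * F Q) ∧
    Φ P - Φ Q = E P * (P - Q) * (E Q)ᵀ :=
  statement3_general A B R R₀ hR₀ S hSdef Φ E F hΦ hE hF P Q hP hQ
end

section
/- (i) For every positive semidefinite P ∈ ℝ^{d×d}, Φ(P) is symmetric. (ii) For all positive semidefinite P, Q and every n ≥ 1: if P ≥ Q in Loewner order then Φ_n(P) ≥ Φ_n(Q); moreover Φ_{n+1}(0) ≥ Φ_n(0) for every n ≥ 0. -/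
/-!
The Riccati map is monotone on the positive semidefinite cone because its core
`P ↦ (1 + P S)⁻¹ P` is: with `M = (1 + Q S)⁻¹`, one has
`(1 + P S)⁻¹ P - (1 + Q S)⁻¹ Q = (1 + E T)⁻¹ E` for `E = M (P - Q) Mᴴ` and `T = S + S Q S`,
and `(1 + E T)⁻¹ E = Bᴴ (1 + B T Bᴴ)⁻¹ B` is positive semidefinite whenever `E = Bᴴ B` and
`T ≥ 0`. Monotonicity passes to the iterates, and `Φ_{n+1}(0) = Φ_n(Φ(0)) ≥ Φ_n(0)`
because `Φ(0) ≥ 0`.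
-/

open Matrix Set

open scoped ComplexOrder MatrixOrder

theorem MonotoneOn.iterate {α : Type*} [Preorder α] {f : α → α} {s : Set α}
    (hf : MonotoneOn f s) (hs : MapsTo f s s) : ∀ n, MonotoneOn f^[n] s
  | 0 => monotoneOn_id
  | n + 1 => (hf.iterate hs n).comp hf hs

namespace Matrix

theorem inv_mul_eq_mul_inv_of_mul_eq {α m n : Type*} [CommRing α] [Fintype m] [DecidableEq m]
    [Fintype n] [DecidableEq n] {U : Matrix m m α} {V : Matrix n n α} {X : Matrix m n α}
    (hU : IsUnit U.det) (hV : IsUnit V.det) (h : U * X = X * V) : U⁻¹ * X = X * V⁻¹ :=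
  calc U⁻¹ * X = U⁻¹ * (X * V) * V⁻¹ := by
        rw [Matrix.mul_assoc U⁻¹, mul_nonsing_inv_cancel_right _ _ hV]
    _ = X * V⁻¹ := by rw [← h, nonsing_inv_mul_cancel_left _ _ hU]

theorem PosSemidef.posDef_one_add_mul_mul_conjTranspose {𝕜 m n : Type*} [RCLike 𝕜] [Fintype m]
    [DecidableEq m] [Fintype n] {T : Matrix n n 𝕜} (hT : T.PosSemidef) (B : Matrix m n 𝕜) :
    (1 + B * T * Bᴴ).PosDef :=
  PosDef.one.add_posSemidef (hT.mul_mul_conjTranspose_same B)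

variable {𝕜 n : Type*} [RCLike 𝕜] [Fintype n] [DecidableEq n]

theorem PosSemidef.isUnit_det_one_add_mul {X Y : Matrix n n 𝕜} (hX : X.PosSemidef)
    (hY : Y.PosSemidef) : IsUnit (1 + X * Y).det := by
  obtain ⟨B, rfl⟩ := CStarAlgebra.nonneg_iff_eq_star_mul_self.mp hX.nonneg
  rw [star_eq_conjTranspose, mul_assoc, det_one_add_mul_comm]
  exact (isUnit_iff_isUnit_det _).mp (hY.posDef_one_add_mul_mul_conjTranspose B).isUnit

theorem PosSemidef.inv_one_add_mul_mul {E T : Matrix n n 𝕜} (hE : E.PosSemidef)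
    (hT : T.PosSemidef) : ((1 + E * T)⁻¹ * E).PosSemidef := by
  have hdet := hE.isUnit_det_one_add_mul hT
  obtain ⟨B, rfl⟩ := CStarAlgebra.nonneg_iff_eq_star_mul_self.mp hE.nonneg
  rw [star_eq_conjTranspose] at hdet ⊢
  have hK := hT.posDef_one_add_mul_mul_conjTranspose B
  have push : (1 + Bᴴ * B * T)⁻¹ * Bᴴ = Bᴴ * (1 + B * T * Bᴴ)⁻¹ :=
    inv_mul_eq_mul_inv_of_mul_eq hdet ((isUnit_iff_isUnit_det _).mp hK.isUnit) (by noncomm_ring)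
  rw [← mul_assoc, push]
  exact hK.inv.posSemidef.conjTranspose_mul_mul_same B

theorem monotoneOn_inv_one_add_mul_mul {S : Matrix n n 𝕜} (hS : S.PosSemidef) :
    MonotoneOn (fun P ↦ (1 + P * S)⁻¹ * P) (Ici 0) := by
  intro Q hQ P hP hQP
  rw [mem_Ici, nonneg_iff_posSemidef] at hQ hP
  rw [le_iff] at hQP ⊢
  set M := (1 + Q * S)⁻¹
  have hMH : Mᴴ = (1 + S * Q)⁻¹ := by
    rw [conjTranspose_nonsing_inv, conjTranspose_add, conjTranspose_one, conjTranspose_mul,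
      hS.isHermitian.eq, hQ.isHermitian.eq]
  have hM_left : M * (1 + Q * S) = 1 := nonsing_inv_mul _ (hQ.isUnit_det_one_add_mul hS)
  have hSQ := hS.isUnit_det_one_add_mul hQ
  have hMH_right : (1 + S * Q) * Mᴴ = 1 := hMH ▸ mul_nonsing_inv _ hSQ
  have hMH_left : Mᴴ * (1 + S * Q) = 1 := hMH ▸ nonsing_inv_mul _ hSQ
  have push : M * Q = Q * Mᴴ := hMH ▸ inv_mul_eq_mul_inv_of_mul_eq
    (hQ.isUnit_det_one_add_mul hS) hSQ (by noncomm_ring)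
  have hE : (M * (P - Q) * Mᴴ).PosSemidef := hQP.mul_mul_conjTranspose_same M
  have hT : (S + S * Q * S).PosSemidef := by
    simpa only [hS.isHermitian.eq] using hS.add (hQ.conjTranspose_mul_mul_same S)
  have hET : M * (P - Q) * Mᴴ * (S + S * Q * S) = M * (P - Q) * S := by
    rw [show S + S * Q * S = (1 + S * Q) * S by noncomm_ring, mul_assoc, ← mul_assoc Mᴴ,
      hMH_left, one_mul]
  have hMP : 1 + M * (P - Q) * S = M * (1 + P * S) := by
    rw [show 1 + P * S = (1 + Q * S) + (P - Q) * S by noncomm_ring, mul_add, hM_left,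
      mul_assoc]
  have key : (1 + M * (P - Q) * Mᴴ * (S + S * Q * S)) * ((1 + P * S)⁻¹ * P - M * Q)
      = M * (P - Q) * Mᴴ := by
    calc _ = M * (1 + P * S) * ((1 + P * S)⁻¹ * P) - (1 + M * (P - Q) * S) * (M * Q) := by
          rw [hET, hMP, mul_sub]
      _ = M * (P - Q) - M * (P - Q) * S * (M * Q) := by
          rw [mul_assoc, mul_nonsing_inv_cancel_left _ _ (hP.isUnit_det_one_add_mul hS)]
          noncomm_ring
      _ = M * (P - Q) * ((1 + S * Q) * Mᴴ - S * Q * Mᴴ) := by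
          rw [push, hMH_right]
          noncomm_ring
      _ = M * (P - Q) * Mᴴ := by noncomm_ring
  rw [← nonsing_inv_mul_cancel_left _ ((1 + P * S)⁻¹ * P - M * Q)
    (hE.isUnit_det_one_add_mul hT), key]
  exact hE.inv_one_add_mul_mul hT

noncomputable def riccati (A S R P : Matrix n n 𝕜) : Matrix n n 𝕜 :=
  A * ((1 + P * S)⁻¹ * P) * Aᴴ + R

theorem mapsTo_riccati (A : Matrix n n 𝕜) {S R : Matrix n n 𝕜} (hS : S.PosSemidef)
    (hR : 0 ≤ R) : MapsTo (riccati A S R) (Ici 0) (Ici 0) := fun _ hP ↦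
  add_nonneg (star_right_conjugate_nonneg
    ((nonneg_iff_posSemidef.mp hP).inv_one_add_mul_mul hS).nonneg A) hR

theorem monotoneOn_riccati (A : Matrix n n 𝕜) {S : Matrix n n 𝕜} (R : Matrix n n 𝕜)
    (hS : S.PosSemidef) : MonotoneOn (riccati A S R) (Ici 0) := fun _ hQ _ hP hQP ↦
  add_le_add_left
    (star_right_conjugate_le_conjugate (monotoneOn_inv_one_add_mul_mul hS hQ hP hQP) A) R

end Matrix

theorem statement4_general {d d₀ : ℕ}
    (A : Matrix (Fin d) (Fin d) ℝ) (B : Matrix (Fin d₀) (Fin d) ℝ)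
    (R : Matrix (Fin d) (Fin d) ℝ) (R₀ : Matrix (Fin d₀) (Fin d₀) ℝ)
    (hR : R.PosDef) (hR₀ : R₀.PosDef)
    (S : Matrix (Fin d) (Fin d) ℝ) (hSdef : S = Bᵀ * R₀⁻¹ * B)
    (Φ : Matrix (Fin d) (Fin d) ℝ → Matrix (Fin d) (Fin d) ℝ)
    (hΦ : ∀ P, Φ P = A * (1 + P * S)⁻¹ * P * Aᵀ + R) :
    (∀ P : Matrix (Fin d) (Fin d) ℝ, P.PosSemidef → (Φ P)ᵀ = Φ P) ∧
    (∀ P Q : Matrix (Fin d) (Fin d) ℝ, P.PosSemidef → Q.PosSemidef →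
      ∀ n : ℕ, 1 ≤ n → (P - Q).PosSemidef → (Φ^[n] P - Φ^[n] Q).PosSemidef) ∧
    (∀ n : ℕ, (Φ^[n + 1] 0 - Φ^[n] 0).PosSemidef) := by
  have hS : S.PosSemidef := by
    simpa only [hSdef, conjTranspose_eq_transpose_of_trivial] using
      hR₀.inv.posSemidef.conjTranspose_mul_mul_same B
  obtain rfl : Φ = riccati A S R := funext fun P ↦ by
    rw [hΦ, riccati, conjTranspose_eq_transpose_of_trivial, Matrix.mul_assoc A]
  have hmaps := mapsTo_riccati A hS hR.posSemidef.nonneg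
  have hmono := monotoneOn_riccati A R hS
  refine ⟨fun P hP ↦ ?_, fun P Q hP hQ n _ hPQ ↦ ?_, fun n ↦ ?_⟩
  · rw [← conjTranspose_eq_transpose_of_trivial]
    exact (hmaps hP.nonneg).posSemidef.isHermitian.eq
  · exact hmono.iterate hmaps n hQ.nonneg hP.nonneg hPQ
  · rw [Function.iterate_succ_apply]
    exact hmono.iterate hmaps n self_mem_Ici (hmaps self_mem_Ici) (hmaps self_mem_Ici)

/-- With `S := Bᵀ R₀⁻¹ B`, Riccati map `Φ(P) := A (I + P S)⁻¹ P Aᵀ + R`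
and semigroup `Φ₀ = id`, `Φ_{n+1} = Φ ∘ Φ_n`:
(i) for every positive semidefinite `P`, `Φ(P)` is symmetric;
(ii) for all positive semidefinite `P, Q` and every `n ≥ 1`, if `P ≥ Q` in the Loewner
order then `Φ_n(P) ≥ Φ_n(Q)`; moreover `Φ_{n+1}(0) ≥ Φ_n(0)` for every `n ≥ 0`. -/
theorem statement4 {d d₀ : ℕ} (hd : 1 ≤ d) (hd₀ : 1 ≤ d₀)
    (A : Matrix (Fin d) (Fin d) ℝ) (B : Matrix (Fin d₀) (Fin d) ℝ)
    (R : Matrix (Fin d) (Fin d) ℝ) (R₀ : Matrix (Fin d₀) (Fin d₀) ℝ)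
    (hR : R.PosDef) (hR₀ : R₀.PosDef)
    (S : Matrix (Fin d) (Fin d) ℝ) (hSdef : S = Bᵀ * R₀⁻¹ * B)
    (Φ : Matrix (Fin d) (Fin d) ℝ → Matrix (Fin d) (Fin d) ℝ)
    (hΦ : ∀ P, Φ P = A * (1 + P * S)⁻¹ * P * Aᵀ + R) :
    (∀ P : Matrix (Fin d) (Fin d) ℝ, P.PosSemidef → (Φ P)ᵀ = Φ P) ∧
    (∀ P Q : Matrix (Fin d) (Fin d) ℝ, P.PosSemidef → Q.PosSemidef →
      ∀ n : ℕ, 1 ≤ n → (P - Q).PosSemidef → (Φ^[n] P - Φ^[n] Q).PosSemidef) ∧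
    (∀ n : ℕ, (Φ^[n + 1] 0 - Φ^[n] 0).PosSemidef) :=
  statement4_general A B R R₀ hR hR₀ S hSdef Φ hΦ
end

section
/- For every positive semidefinite P ∈ ℝ^{d×d}: 𝓕(P) = S^{1/2} (I + S^{1/2} P S^{1/2})⁻¹ S^{1/2}, and in Loewner order α₋(P)·S ≤ 𝓕(P) ≤ α₊(P)·S, where α₋(P) := (1 + λ₁(P)λ₁(S))⁻¹ and α₊(P) := (1 + λ_d(P)λ_d(S))⁻¹. -/
/-!
Write `Q = S^{1/2}`. The push-through identity `Q (1 + P Q²) = (1 + Q P Q) Q` gives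
`𝓕(P) = Q (1 + Q P Q)⁻¹ Q`. By the Rayleigh bounds `λ_d(M) ≤ M ≤ λ₁(M)` and `λ_d(S) ≤ Q² ≤ λ₁(S)`,
the middle factor satisfies `1 + λ_d(P)λ_d(S) ≤ 1 + Q P Q ≤ 1 + λ₁(P)λ₁(S)`. Inversion reverses
scalar bounds (functional calculus on the spectrum), and conjugating by `Q` turns `1` into `S`.
-/

open Matrix

noncomputable section

open Classical in
/-- The positive semidefinite square root of a positive semidefinite matrix
(junk value `0` if the matrix is not positive semidefinite). -/
def msqrt {d : ℕ} (M : Matrix (Fin d) (Fin d) ℝ) : Matrix (Fin d) (Fin d) ℝ :=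
  if h : M.PosSemidef then
    (h.1.eigenvectorUnitary : Matrix (Fin d) (Fin d) ℝ) *
      diagonal ((↑) ∘ (√·) ∘ h.1.eigenvalues) *
      (star h.1.eigenvectorUnitary : Matrix (Fin d) (Fin d) ℝ)
  else 0

/-- The largest eigenvalue `λ₁` of a symmetric matrix, via the Rayleigh
variational characterization. -/
def lamMax {d : ℕ} (M : Matrix (Fin d) (Fin d) ℝ) : ℝ :=
  sSup {r | ∃ x : Fin d → ℝ, x ⬝ᵥ x = 1 ∧ r = x ⬝ᵥ M.mulVec x}

/-- The smallest eigenvalue `λ_d` of a symmetric matrix, via the Rayleigh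
variational characterization. -/
def lamMin {d : ℕ} (M : Matrix (Fin d) (Fin d) ℝ) : ℝ :=
  sInf {r | ∃ x : Fin d → ℝ, x ⬝ᵥ x = 1 ∧ r = x ⬝ᵥ M.mulVec x}

open scoped MatrixOrder

lemma mul_inv_one_add_mul_eq_of_mul_self_eq {n R : Type*} [Fintype n] [DecidableEq n] [CommRing R]
    {Q P S : Matrix n n R} (hQQ : Q * Q = S) :
    S * (1 + P * S)⁻¹ = Q * (1 + Q * P * Q)⁻¹ * Q := by
  -- By Sylvester's determinant identity the two inverses are junk `0` simultaneously.
  subst hQQ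
  have hdet : (1 + P * (Q * Q)).det = (1 + Q * P * Q).det := by
    rw [← Matrix.mul_assoc, det_one_add_mul_comm, Matrix.mul_assoc]
  by_cases hu : IsUnit (1 + Q * P * Q).det
  · have hpush : (1 + Q * P * Q) * Q = Q * (1 + P * (Q * Q)) := by noncomm_ring
    have hcomm : Q * (1 + P * (Q * Q))⁻¹ = (1 + Q * P * Q)⁻¹ * Q :=
      calc Q * (1 + P * (Q * Q))⁻¹
          = (1 + Q * P * Q)⁻¹ * ((1 + Q * P * Q) * Q) * (1 + P * (Q * Q))⁻¹ := by
            rw [nonsing_inv_mul_cancel_left _ _ hu]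
        _ = (1 + Q * P * Q)⁻¹ * Q := by
            rw [hpush, ← Matrix.mul_assoc, mul_nonsing_inv_cancel_right _ _ (hdet ▸ hu)]
    rw [Matrix.mul_assoc, hcomm, ← Matrix.mul_assoc]
  · rw [nonsing_inv_apply_not_isUnit _ hu, nonsing_inv_apply_not_isUnit _ (hdet ▸ hu)]
    simp

lemma continuousOn_inv_spectrum {A : Type*} [Ring A] [Algebra ℝ A] {a : A} (hu : IsUnit a) :
    ContinuousOn (fun x : ℝ ↦ x⁻¹) (spectrum ℝ a) :=
  continuousOn_inv₀.mono fun _ hx h0 ↦ spectrum.zero_notMem ℝ hu (h0 ▸ hx)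

section LoewnerOrder

variable {A : Type*} [Ring A] [StarRing A] [PartialOrder A] [StarOrderedRing A] [Algebra ℝ A]

lemma conj_le_smul_one [PosSMulMono ℝ A] {q a : A} {p s : ℝ} (hq : IsSelfAdjoint q) (hp : 0 ≤ p)
    (ha : a ≤ p • 1) (hqq : q * q ≤ s • 1) : q * a * q ≤ (p * s) • 1 :=
  calc q * a * q ≤ q * (p • 1) * q := hq.conjugate_le_conjugate ha
    _ = p • (q * q) := by simp
    _ ≤ p • (s • 1) := smul_le_smul_of_nonneg_left hqq hp
    _ = (p * s) • 1 := smul_smul p s 1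

lemma smul_one_le_conj [PosSMulMono ℝ A] {q a : A} {p s : ℝ} (hq : IsSelfAdjoint q) (hp : 0 ≤ p)
    (ha : p • 1 ≤ a) (hqq : s • 1 ≤ q * q) : (p * s) • 1 ≤ q * a * q :=
  calc (p * s) • (1 : A) = p • (s • 1) := (smul_smul p s 1).symm
    _ ≤ p • (q * q) := smul_le_smul_of_nonneg_left hqq hp
    _ = q * (p • 1) * q := by simp
    _ ≤ q * a * q := hq.conjugate_le_conjugate ha

variable [TopologicalSpace A] [ContinuousFunctionalCalculus ℝ A IsSelfAdjoint]
  [NonnegSpectrumClass ℝ A]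

lemma ringInverse_le_inv_smul_one {a : A} {b : ℝ} (ha : IsStrictlyPositive a) (hb : 0 < b)
    (h : b • 1 ≤ a) : Ring.inverse a ≤ b⁻¹ • 1 := by
  rw [← Algebra.algebraMap_eq_smul_one] at h ⊢
  rw [← cfc_ringInverse_id (R := ℝ) a ha.isUnit ha.isSelfAdjoint]
  refine (cfc_le_algebraMap_iff _ _ _ (continuousOn_inv_spectrum ha.isUnit)
    ha.isSelfAdjoint).2 fun x hx ↦ ?_
  exact inv_anti₀ hb ((algebraMap_le_iff_le_spectrum ha.isSelfAdjoint).1 h x hx)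

lemma inv_smul_one_le_ringInverse {a : A} {c : ℝ} (ha : IsStrictlyPositive a)
    (h : a ≤ c • 1) : c⁻¹ • 1 ≤ Ring.inverse a := by
  rw [← Algebra.algebraMap_eq_smul_one] at h ⊢
  rw [← cfc_ringInverse_id (R := ℝ) a ha.isUnit ha.isSelfAdjoint]
  refine (algebraMap_le_cfc_iff _ _ _ (continuousOn_inv_spectrum ha.isUnit)
    ha.isSelfAdjoint).2 fun x hx ↦ ?_
  exact inv_anti₀ (ha.spectrum_pos hx) ((le_algebraMap_iff_spectrum_le ha.isSelfAdjoint).1 h x hx)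

lemma inv_smul_le_conj_ringInverse {q a : A} {c : ℝ} (hq : IsSelfAdjoint q)
    (ha : IsStrictlyPositive a) (h : a ≤ c • 1) : c⁻¹ • (q * q) ≤ q * Ring.inverse a * q :=
  calc c⁻¹ • (q * q) = q * (c⁻¹ • 1) * q := by simp
    _ ≤ q * Ring.inverse a * q := hq.conjugate_le_conjugate (inv_smul_one_le_ringInverse ha h)

lemma conj_ringInverse_le_inv_smul {q a : A} {b : ℝ} (hq : IsSelfAdjoint q)
    (ha : IsStrictlyPositive a) (hb : 0 < b) (h : b • 1 ≤ a) :
    q * Ring.inverse a * q ≤ b⁻¹ • (q * q) :=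
  calc q * Ring.inverse a * q ≤ q * (b⁻¹ • 1) * q :=
        hq.conjugate_le_conjugate (ringInverse_le_inv_smul_one ha hb h)
    _ = b⁻¹ • (q * q) := by simp

end LoewnerOrder

section

variable {d : ℕ}

lemma msqrt_eq_sqrt {M : Matrix (Fin d) (Fin d) ℝ} (hM : M.PosSemidef) :
    msqrt M = CFC.sqrt M := by
  rw [msqrt, dif_pos hM, CFC.sqrt_eq_cfc, cfc_nnreal_eq_real _ M hM.nonneg, hM.1.cfc_eq]
  simp [IsHermitian.cfc, Function.comp_def, hM.eigenvalues_nonneg]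

lemma isSelfAdjoint_msqrt {M : Matrix (Fin d) (Fin d) ℝ} (hM : M.PosSemidef) :
    IsSelfAdjoint (msqrt M) :=
  msqrt_eq_sqrt hM ▸ (CFC.sqrt_nonneg M).isSelfAdjoint

lemma msqrt_mul_msqrt {M : Matrix (Fin d) (Fin d) ℝ} (hM : M.PosSemidef) :
    msqrt M * msqrt M = M :=
  msqrt_eq_sqrt hM ▸ CFC.sqrt_mul_sqrt_self M hM.nonneg

def rayleighSet (M : Matrix (Fin d) (Fin d) ℝ) : Set ℝ :=
  {r | ∃ x : Fin d → ℝ, x ⬝ᵥ x = 1 ∧ r = x ⬝ᵥ M.mulVec x}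

lemma isCompact_setOf_dotProduct_self_eq_one : IsCompact {x : Fin d → ℝ | x ⬝ᵥ x = 1} := by
  refine Metric.isCompact_of_isClosed_isBounded (isClosed_eq (by fun_prop) continuous_const) ?_
  refine (Metric.isBounded_closedBall (x := 0) (r := 1)).subset fun x hx ↦ ?_
  rw [mem_closedBall_zero_iff, pi_norm_le_iff_of_nonneg zero_le_one]
  intro i
  rw [Real.norm_eq_abs, abs_le_one_iff_mul_self_le_one]
  calc x i * x i ≤ x ⬝ᵥ x :=
        Finset.single_le_sum (fun j _ ↦ mul_self_nonneg (x j)) (Finset.mem_univ i)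
    _ = 1 := hx

lemma isBounded_rayleighSet (M : Matrix (Fin d) (Fin d) ℝ) :
    Bornology.IsBounded (rayleighSet M) := by
  have : rayleighSet M = (fun x ↦ x ⬝ᵥ M *ᵥ x) '' {x | x ⬝ᵥ x = 1} := by
    ext r
    simp [rayleighSet, eq_comm]
  rw [this]
  exact (isCompact_setOf_dotProduct_self_eq_one.image (by fun_prop)).isBounded

lemma exists_mem_rayleighSet (M : Matrix (Fin d) (Fin d) ℝ) {x : Fin d → ℝ} (hx : x ≠ 0) :
    ∃ r ∈ rayleighSet M, x ⬝ᵥ M *ᵥ x = r * (x ⬝ᵥ x) := by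
  have hpos : 0 < x ⬝ᵥ x := by simpa using dotProduct_self_star_pos_iff.2 hx
  set c := √(x ⬝ᵥ x)
  have hc : c * c = x ⬝ᵥ x := Real.mul_self_sqrt hpos.le
  have hc0 : c ≠ 0 := (Real.sqrt_pos.2 hpos).ne'
  refine ⟨(c⁻¹ • x) ⬝ᵥ M *ᵥ (c⁻¹ • x), ⟨c⁻¹ • x, ?_, rfl⟩, ?_⟩
  · simp only [smul_dotProduct, dotProduct_smul, smul_eq_mul, ← hc]
    field_simp
  · simp only [smul_dotProduct, mulVec_smul, dotProduct_smul, smul_eq_mul, ← hc]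
    field_simp

lemma dotProduct_mulVec_le_lamMax_mul (M : Matrix (Fin d) (Fin d) ℝ) (x : Fin d → ℝ) :
    x ⬝ᵥ M *ᵥ x ≤ lamMax M * (x ⬝ᵥ x) := by
  rcases eq_or_ne x 0 with rfl | hx
  · simp
  obtain ⟨r, hr, hxr⟩ := exists_mem_rayleighSet M hx
  rw [hxr]
  exact mul_le_mul_of_nonneg_right (le_csSup (isBounded_rayleighSet M).bddAbove hr)
    (by simpa using dotProduct_self_star_nonneg x)

lemma lamMin_mul_le_dotProduct_mulVec (M : Matrix (Fin d) (Fin d) ℝ) (x : Fin d → ℝ) :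
    lamMin M * (x ⬝ᵥ x) ≤ x ⬝ᵥ M *ᵥ x := by
  rcases eq_or_ne x 0 with rfl | hx
  · simp
  obtain ⟨r, hr, hxr⟩ := exists_mem_rayleighSet M hx
  rw [hxr]
  exact mul_le_mul_of_nonneg_right (csInf_le (isBounded_rayleighSet M).bddBelow hr)
    (by simpa using dotProduct_self_star_nonneg x)

lemma lamMax_nonneg {M : Matrix (Fin d) (Fin d) ℝ} (hM : M.PosSemidef) : 0 ≤ lamMax M :=
  Real.sSup_nonneg fun _ ⟨x, _, hr⟩ ↦ hr ▸ by simpa using hM.dotProduct_mulVec_nonneg x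

lemma lamMin_nonneg {M : Matrix (Fin d) (Fin d) ℝ} (hM : M.PosSemidef) : 0 ≤ lamMin M :=
  Real.sInf_nonneg fun _ ⟨x, _, hr⟩ ↦ hr ▸ by simpa using hM.dotProduct_mulVec_nonneg x

lemma le_lamMax_smul_one {M : Matrix (Fin d) (Fin d) ℝ} (hM : M.IsHermitian) :
    M ≤ lamMax M • 1 := by
  refine .of_dotProduct_mulVec_nonneg ((isHermitian_one.smul (.all _)).sub hM) fun x ↦ ?_
  simpa [sub_mulVec, smul_mulVec] using dotProduct_mulVec_le_lamMax_mul M x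

lemma lamMin_smul_one_le {M : Matrix (Fin d) (Fin d) ℝ} (hM : M.IsHermitian) :
    lamMin M • 1 ≤ M := by
  refine .of_dotProduct_mulVec_nonneg (hM.sub (isHermitian_one.smul (.all _))) fun x ↦ ?_
  simpa [sub_mulVec, smul_mulVec] using lamMin_mul_le_dotProduct_mulVec M x

end

theorem statement5_general {d d₀ : ℕ}
    (B : Matrix (Fin d₀) (Fin d) ℝ) (R₀ : Matrix (Fin d₀) (Fin d₀) ℝ)
    (hR₀ : R₀.PosDef)
    (S : Matrix (Fin d) (Fin d) ℝ) (hSdef : S = Bᵀ * R₀⁻¹ * B)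
    (F : Matrix (Fin d) (Fin d) ℝ → Matrix (Fin d) (Fin d) ℝ)
    (hF : ∀ P, F P = S * (1 + P * S)⁻¹)
    (P : Matrix (Fin d) (Fin d) ℝ) (hP : P.PosSemidef) :
    F P = msqrt S * (1 + msqrt S * P * msqrt S)⁻¹ * msqrt S ∧
    (F P - (1 + lamMax P * lamMax S)⁻¹ • S).PosSemidef ∧
    ((1 + lamMin P * lamMin S)⁻¹ • S - F P).PosSemidef := by
  have hS : S.PosSemidef := by
    rw [hSdef, ← conjTranspose_eq_transpose_of_trivial]
    exact hR₀.inv.posSemidef.conjTranspose_mul_mul_same B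
  have hFP : F P = msqrt S * (1 + msqrt S * P * msqrt S)⁻¹ * msqrt S := by
    rw [hF, mul_inv_one_add_mul_eq_of_mul_self_eq (msqrt_mul_msqrt hS)]
  set Q := msqrt S
  have hQ : IsSelfAdjoint Q := isSelfAdjoint_msqrt hS
  have hQQ : Q * Q = S := msqrt_mul_msqrt hS
  have hM : IsStrictlyPositive (1 + Q * P * Q) := by
    refine (PosDef.one.add_posSemidef ?_).isStrictlyPositive
    simpa only [← star_eq_conjTranspose, hQ.star_eq] using hP.conjTranspose_mul_mul_same Q
  have hupper : 1 + Q * P * Q ≤ (1 + lamMax P * lamMax S) • 1 := by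
    rw [add_smul, one_smul]
    exact add_le_add_right (conj_le_smul_one hQ (lamMax_nonneg hP) (le_lamMax_smul_one hP.1)
      (hQQ.le.trans (le_lamMax_smul_one hS.1))) 1
  have hlower : (1 + lamMin P * lamMin S) • 1 ≤ 1 + Q * P * Q := by
    rw [add_smul, one_smul]
    exact add_le_add_right (smul_one_le_conj hQ (lamMin_nonneg hP) (lamMin_smul_one_le hP.1)
      ((lamMin_smul_one_le hS.1).trans hQQ.ge)) 1
  have hb : 0 < 1 + lamMin P * lamMin S :=
    add_pos_of_pos_of_nonneg one_pos (mul_nonneg (lamMin_nonneg hP) (lamMin_nonneg hS))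
  rw [← le_iff, ← le_iff, hFP, nonsing_inv_eq_ringInverse]
  refine ⟨rfl, ?_, ?_⟩
  · simpa only [hQQ] using inv_smul_le_conj_ringInverse hQ hM hupper
  · simpa only [hQQ] using conj_ringInverse_le_inv_smul hQ hM hb hlower

/-- With `S := Bᵀ R₀⁻¹ B` and `𝓕(P) := S (I + P S)⁻¹`, for every
positive semidefinite `P`: `𝓕(P) = S^{1/2} (I + S^{1/2} P S^{1/2})⁻¹ S^{1/2}` and,
in the Loewner order, `α₋(P)·S ≤ 𝓕(P) ≤ α₊(P)·S`, where
`α₋(P) = (1 + λ₁(P)λ₁(S))⁻¹` and `α₊(P) = (1 + λ_d(P)λ_d(S))⁻¹`. -/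
theorem statement5 {d d₀ : ℕ} (hd : 1 ≤ d) (hd₀ : 1 ≤ d₀)
    (B : Matrix (Fin d₀) (Fin d) ℝ) (R₀ : Matrix (Fin d₀) (Fin d₀) ℝ)
    (hR₀ : R₀.PosDef)
    (S : Matrix (Fin d) (Fin d) ℝ) (hSdef : S = Bᵀ * R₀⁻¹ * B)
    (F : Matrix (Fin d) (Fin d) ℝ → Matrix (Fin d) (Fin d) ℝ)
    (hF : ∀ P, F P = S * (1 + P * S)⁻¹)
    (P : Matrix (Fin d) (Fin d) ℝ) (hP : P.PosSemidef) :
    F P = msqrt S * (1 + msqrt S * P * msqrt S)⁻¹ * msqrt S ∧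
    (F P - (1 + lamMax P * lamMax S)⁻¹ • S).PosSemidef ∧
    ((1 + lamMin P * lamMin S)⁻¹ • S - F P).PosSemidef :=
  statement5_general B R₀ hR₀ S hSdef F hF P hP
end
end

section
/- Let P∞ ∈ ℝ^{d×d} be positive definite with Φ(P∞) = P∞ and let n ≥ 1. Let P, Q ∈ ℝ^{d×d} be positive semidefinite, assume 𝓛_n(P) and 𝓛_n(Q) are invertible and that the Floquet formula 𝓔_n(P) = 𝓔(P∞)^n 𝓛_n(P)⁻¹ and 𝓔_n(Q) = 𝓔(P∞)^n 𝓛_n(Q)⁻¹ holds. Then: (first order) 𝓔_n(Q) − 𝓔_n(P) = −𝓔_n(Q) (Q − P) 𝒢_n 𝓛_n(P)⁻¹; and (second order) 𝓔_n(Q) − 𝓔_n(P) = −𝓔_n(P) (Q − P) 𝒢_n 𝓛_n(P)⁻¹ + 𝓔_n(Q) (Q − P) 𝒢_n 𝓛_n(P)⁻¹ (Q − P) 𝒢_n 𝓛_n(P)⁻¹. -/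
open Matrix

noncomputable section

/-- The Riccati map `Φ(P) := A (I + P S)⁻¹ P Aᵀ + R`. -/
def Ricc {d : ℕ} (A S R P : Matrix (Fin d) (Fin d) ℝ) : Matrix (Fin d) (Fin d) ℝ :=
  A * (1 + P * S)⁻¹ * P * Aᵀ + R

/-- The map `𝓔(P) := A (I + P S)⁻¹`. -/
def Emat {d : ℕ} (A S P : Matrix (Fin d) (Fin d) ℝ) : Matrix (Fin d) (Fin d) ℝ :=
  A * (1 + P * S)⁻¹

/-- The directed products `𝓔₀(P) := I`, `𝓔_{n+1}(P) := 𝓔_n(Φ(P)) 𝓔(P)`. -/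
def Edir {d : ℕ} (A S R : Matrix (Fin d) (Fin d) ℝ) :
    ℕ → Matrix (Fin d) (Fin d) ℝ → Matrix (Fin d) (Fin d) ℝ
  | 0, _ => 1
  | n + 1, P => Edir A S R n (Ricc A S R P) * Emat A S P

/-- Let `P∞` be a positive definite fixed point of `Φ` and `n ≥ 1`.
For positive semidefinite `P, Q` with `𝓛_n(P)`, `𝓛_n(Q)` invertible and satisfying the
Floquet formula `𝓔_n(P) = 𝓔(P∞)^n 𝓛_n(P)⁻¹`, `𝓔_n(Q) = 𝓔(P∞)^n 𝓛_n(Q)⁻¹`, one has the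
first order decomposition `𝓔_n(Q) − 𝓔_n(P) = −𝓔_n(Q) (Q − P) 𝒢_n 𝓛_n(P)⁻¹` and the
second order decomposition
`𝓔_n(Q) − 𝓔_n(P) = −𝓔_n(P) (Q − P) 𝒢_n 𝓛_n(P)⁻¹
  + 𝓔_n(Q) (Q − P) 𝒢_n 𝓛_n(P)⁻¹ (Q − P) 𝒢_n 𝓛_n(P)⁻¹`. -/
theorem statement9 {d d₀ : ℕ} (hd : 1 ≤ d) (hd₀ : 1 ≤ d₀)
    (A : Matrix (Fin d) (Fin d) ℝ) (B : Matrix (Fin d₀) (Fin d) ℝ)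
    (R : Matrix (Fin d) (Fin d) ℝ) (R₀ : Matrix (Fin d₀) (Fin d₀) ℝ)
    (hR : R.PosDef) (hR₀ : R₀.PosDef)
    (S : Matrix (Fin d) (Fin d) ℝ) (hSdef : S = Bᵀ * R₀⁻¹ * B)
    (Pinf : Matrix (Fin d) (Fin d) ℝ) (hPinf : Pinf.PosDef)
    (hfix : Ricc A S R Pinf = Pinf)
    (n : ℕ) (hn : 1 ≤ n)
    (G : Matrix (Fin d) (Fin d) ℝ)
    (hG : G = ∑ k ∈ Finset.range n,
      ((Emat A S Pinf) ^ k)ᵀ * (S * (1 + Pinf * S)⁻¹) * (Emat A S Pinf) ^ k)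
    (L : Matrix (Fin d) (Fin d) ℝ → Matrix (Fin d) (Fin d) ℝ)
    (hL : ∀ P, L P = 1 + (P - Pinf) * G)
    (P Q : Matrix (Fin d) (Fin d) ℝ) (hP : P.PosSemidef) (hQ : Q.PosSemidef)
    (hLP : IsUnit (L P)) (hLQ : IsUnit (L Q))
    (hFloqP : Edir A S R n P = (Emat A S Pinf) ^ n * (L P)⁻¹)
    (hFloqQ : Edir A S R n Q = (Emat A S Pinf) ^ n * (L Q)⁻¹) :
    Edir A S R n Q - Edir A S R n P = -(Edir A S R n Q * (Q - P) * G * (L P)⁻¹) ∧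
    Edir A S R n Q - Edir A S R n P =
      -(Edir A S R n P * (Q - P) * G * (L P)⁻¹) +
      Edir A S R n Q * (Q - P) * G * (L P)⁻¹ * (Q - P) * G * (L P)⁻¹ := by

  have h1 : L P * (L P)⁻¹ = 1 :=
    Matrix.mul_nonsing_inv _ ((Matrix.isUnit_iff_isUnit_det _).mp hLP)
  have h2 : (L Q)⁻¹ * L Q = 1 :=
    Matrix.nonsing_inv_mul _ ((Matrix.isUnit_iff_isUnit_det _).mp hLQ)
  have hdiff : (L Q)⁻¹ - (L P)⁻¹ = -((L Q)⁻¹ * (Q - P) * G * (L P)⁻¹) := by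
    have hLL : L P - L Q = -((Q - P) * G) := by rw [hL, hL]; noncomm_ring
    calc (L Q)⁻¹ - (L P)⁻¹
        = (L Q)⁻¹ * (L P * (L P)⁻¹) - ((L Q)⁻¹ * L Q) * (L P)⁻¹ := by
          rw [h1, h2, mul_one, one_mul]
      _ = (L Q)⁻¹ * (L P - L Q) * (L P)⁻¹ := by noncomm_ring
      _ = -((L Q)⁻¹ * (Q - P) * G * (L P)⁻¹) := by rw [hLL]; noncomm_ring
  have first : Edir A S R n Q - Edir A S R n P =
      -(Edir A S R n Q * (Q - P) * G * (L P)⁻¹) := by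
    rw [hFloqP, hFloqQ]
    calc (Emat A S Pinf) ^ n * (L Q)⁻¹ - (Emat A S Pinf) ^ n * (L P)⁻¹
        = (Emat A S Pinf) ^ n * ((L Q)⁻¹ - (L P)⁻¹) := by noncomm_ring
      _ = _ := by rw [hdiff]; noncomm_ring
  refine ⟨first, ?_⟩
  have key : Edir A S R n Q =
      Edir A S R n P - Edir A S R n Q * (Q - P) * G * (L P)⁻¹ := by
    have := first; linear_combination (norm := noncomm_ring) this
  calc Edir A S R n Q - Edir A S R n P
      = -(Edir A S R n Q * (Q - P) * G * (L P)⁻¹) := first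
    _ = -((Edir A S R n P - Edir A S R n Q * (Q - P) * G * (L P)⁻¹)
          * (Q - P) * G * (L P)⁻¹) := by rw [← key]
    _ = _ := by noncomm_ring
end
end

section
/- Assume S is positive definite. Let p be a random d×d matrix on a probability space, almost surely positive definite and with integrable entries. Then E[p] is positive definite and E[A (I + p S)⁻¹ p Aᵀ] ≤ A (I + E[p] S)⁻¹ E[p] Aᵀ in Loewner order; consequently E[Φ(p)] ≤ Φ(E[p]). -/
open Matrix MeasureTheory

noncomputable section

/-- Entrywise expectation of a random matrix. -/
def matExp {Ω : Type} [MeasurableSpace Ω] (μ : Measure Ω) {m n : ℕ}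
    (p : Ω → Matrix (Fin m) (Fin n) ℝ) : Matrix (Fin m) (Fin n) ℝ :=
  Matrix.of fun i j => ∫ ω, p ω i j ∂μ

/-!
For a gain `K`, the affine majorant `h_K(P) = (1 - K) P (1 - K)ᵀ + K S⁻¹ Kᵀ` dominates
`g(P) = (1 + P S)⁻¹ P = P - P (P + S⁻¹)⁻¹ P` on positive semidefinite `P`: completing
the square, `h_K(P) - g(P) = (K - L) (P + S⁻¹) (K - L)ᵀ` with `L = P (P + S⁻¹)⁻¹`, which
vanishes at `K = L`. So `g` is a pointwise minimum of affine maps, hence concave, and Jensen's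
inequality follows by choosing `K` optimal at `Q = E[p]`: `E[g(p)] ≤ E[h_K(p)] = h_K(Q) = g(Q)`.
Conjugating by `A` and adding `R` gives the statements about `Φ`. The sandwich
`0 ≤ g(p) ≤ p` makes `g(p)` integrable.
-/

section Algebra
variable {n : Type*} [Fintype n] [DecidableEq n] {S P : Matrix n n ℝ}

lemma Matrix.PosSemidef.abs_apply_le {G : Matrix n n ℝ} (hG : G.PosSemidef) (k l : n) :
    |G k l| ≤ (G k k + G l l) / 2 := by
  have hsymm : G l k = G k l := by simpa using hG.isHermitian.apply k l
  have hquad (c : ℝ) : 0 ≤ G k k + 2 * c * G k l + c ^ 2 * G l l := by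
    have h := hG.dotProduct_mulVec_nonneg (Pi.single k 1 + Pi.single l c)
    simp only [star_trivial, mulVec_add, mulVec_single, MulOpposite.op_one, one_smul,
      op_smul_eq_smul, dotProduct_add, add_dotProduct, single_dotProduct, col_apply, one_mul, hsymm,
      dotProduct_smul, smul_eq_mul] at h
    linear_combination h
  rw [abs_le]
  constructor <;> nlinarith [hquad 1, hquad (-1)]

def riccatiMajorant (S K P : Matrix n n ℝ) : Matrix n n ℝ :=
  (1 - K) * P * (1 - K)ᵀ + K * S⁻¹ * Kᵀ

lemma one_add_mul_inv_mul_eq_inv_add (hP : IsUnit P.det) :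
    (1 + P * S)⁻¹ * P = (P⁻¹ + S)⁻¹ := by
  rw [← mul_nonsing_inv P hP, ← mul_add, Matrix.mul_inv_rev, mul_assoc, nonsing_inv_mul P hP,
    mul_one]

lemma one_add_mul_inv_mul_eq_sub (hS : S.PosDef) (hP : P.PosSemidef) :
    (1 + P * S)⁻¹ * P = P - P * (P + S⁻¹)⁻¹ * P := by
  have hSu : IsUnit S.det := hS.det_pos.ne'.isUnit
  have hMu : IsUnit (P + S⁻¹).det := (hS.inv.posSemidef_add hP).det_pos.ne'.isUnit
  have h1 : 1 + P * S = (P + S⁻¹) * S := by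
    rw [add_mul, nonsing_inv_mul S hSu, add_comm]
  calc (1 + P * S)⁻¹ * P = S⁻¹ * (P + S⁻¹)⁻¹ * P := by rw [h1, Matrix.mul_inv_rev]
    _ = ((P + S⁻¹) - P) * (P + S⁻¹)⁻¹ * P := by rw [add_sub_cancel_left]
    _ = P - P * (P + S⁻¹)⁻¹ * P := by rw [sub_mul, sub_mul, mul_nonsing_inv _ hMu, one_mul]

lemma riccatiMajorant_sub_eq (hS : S.PosDef) (hP : P.PosSemidef) (K : Matrix n n ℝ) :
    riccatiMajorant S K P - (1 + P * S)⁻¹ * P =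
      (K - P * (P + S⁻¹)⁻¹) * (P + S⁻¹) * (K - P * (P + S⁻¹)⁻¹)ᵀ := by
  have hMpd : (P + S⁻¹).PosDef := hS.inv.posSemidef_add hP
  have hPt : Pᵀ = P := by simpa using hP.isHermitian.eq
  rw [riccatiMajorant, one_add_mul_inv_mul_eq_sub hS hP]
  generalize hM : P + S⁻¹ = M at hMpd ⊢
  rw [show S⁻¹ = M - P by rw [← hM, add_sub_cancel_left]]
  have hMu : IsUnit M.det := hMpd.det_pos.ne'.isUnit
  have hMt : M⁻¹ᵀ = M⁻¹ := by simpa using hMpd.inv.isHermitian.eq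
  calc _ = K * M * Kᵀ - K * P - P * Kᵀ + P * M⁻¹ * P := by
        rw [transpose_sub, transpose_one]; noncomm_ring
    _ = _ := by
        rw [transpose_sub, transpose_mul, hMt, hPt]
        simp only [mul_sub, sub_mul, mul_assoc, nonsing_inv_mul _ hMu,
          mul_nonsing_inv_cancel_left _ _ hMu, mul_one]
        abel

lemma posSemidef_riccatiMajorant_sub (hS : S.PosDef) (hP : P.PosSemidef) (K : Matrix n n ℝ) :
    (riccatiMajorant S K P - (1 + P * S)⁻¹ * P).PosSemidef := by
  rw [riccatiMajorant_sub_eq hS hP, ← conjTranspose_eq_transpose_of_trivial]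
  exact (hS.inv.posSemidef_add hP).posSemidef.mul_mul_conjTranspose_same _

lemma riccatiMajorant_optimal_eq (hS : S.PosDef) (hP : P.PosSemidef) :
    riccatiMajorant S (P * (P + S⁻¹)⁻¹) P = (1 + P * S)⁻¹ * P := by
  rw [← sub_eq_zero, riccatiMajorant_sub_eq hS hP, sub_self, zero_mul, zero_mul]

lemma posDef_one_add_mul_inv_mul (hS : S.PosSemidef) (hP : P.PosDef) :
    ((1 + P * S)⁻¹ * P).PosDef := by
  rw [one_add_mul_inv_mul_eq_inv_add hP.det_pos.ne'.isUnit]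
  exact (hP.inv.add_posSemidef hS).inv

lemma posSemidef_sub_one_add_mul_inv_mul (hS : S.PosDef) (hP : P.PosSemidef) :
    (P - (1 + P * S)⁻¹ * P).PosSemidef := by
  rw [one_add_mul_inv_mul_eq_sub hS hP, sub_sub_cancel]
  have h := (hS.inv.posSemidef_add hP).inv.posSemidef.mul_mul_conjTranspose_same P
  rwa [hP.isHermitian.eq] at h

end Algebra

section Measurability
variable {Ω : Type} [MeasurableSpace Ω] {μ : Measure Ω} {n : Type*} [Fintype n] [DecidableEq n]

lemma aemeasurable_det {f : Ω → Matrix n n ℝ}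
    (hf : ∀ i j, AEMeasurable (fun ω => f ω i j) μ) :
    AEMeasurable (fun ω => (f ω).det) μ := by
  simp_rw [det_apply']
  exact Finset.aemeasurable_fun_sum _ fun σ _ =>
    (Finset.aemeasurable_fun_prod _ fun i _ => hf (σ i) i).const_mul _

lemma aemeasurable_inv_apply {f : Ω → Matrix n n ℝ}
    (hf : ∀ i j, AEMeasurable (fun ω => f ω i j) μ) (i j : n) :
    AEMeasurable (fun ω => (f ω)⁻¹ i j) μ := by
  simp_rw [inv_def, Matrix.smul_apply, smul_eq_mul, Ring.inverse_eq_inv, adjugate_apply]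
  refine (aemeasurable_det hf).inv.mul (aemeasurable_det fun k l => ?_)
  simp_rw [updateRow_apply]
  split_ifs
  · exact aemeasurable_const
  · exact hf k l

end Measurability

section Expectation
variable {Ω : Type} [MeasurableSpace Ω] {μ : Measure Ω} {m n : ℕ}

lemma mul_mul_apply_eq_sum {l m n k : Type*} [Fintype m] [Fintype n] (C : Matrix l m ℝ)
    (N : Matrix m n ℝ) (D : Matrix n k ℝ) (i : l) (j : k) :
    (C * N * D) i j = ∑ b, ∑ a, C i a * N a b * D b j := by
  simp only [mul_apply, Finset.sum_mul]

lemma integrable_mul_mul_apply {k k' : ℕ} (C : Matrix (Fin m) (Fin k) ℝ)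
    (D : Matrix (Fin k') (Fin n) ℝ) {g : Ω → Matrix (Fin k) (Fin k') ℝ}
    (hg : ∀ i j, Integrable (fun ω => g ω i j) μ) (i : Fin m) (j : Fin n) :
    Integrable (fun ω => (C * g ω * D) i j) μ := by
  simp_rw [mul_mul_apply_eq_sum]
  exact integrable_finsetSum _ fun l _ => integrable_finsetSum _ fun k _ =>
    ((hg k l).const_mul _).mul_const _

lemma matExp_mul_mul {k k' : ℕ} (C : Matrix (Fin m) (Fin k) ℝ)
    (D : Matrix (Fin k') (Fin n) ℝ) {g : Ω → Matrix (Fin k) (Fin k') ℝ}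
    (hg : ∀ i j, Integrable (fun ω => g ω i j) μ) :
    matExp μ (fun ω => C * g ω * D) = C * matExp μ g * D := by
  ext i j
  simp only [matExp, of_apply, mul_mul_apply_eq_sum]
  rw [integral_finsetSum _ fun l _ => integrable_finsetSum _ fun k _ =>
    ((hg k l).const_mul _).mul_const _]
  refine Finset.sum_congr rfl fun l _ => ?_
  rw [integral_finsetSum _ fun k _ => ((hg k l).const_mul _).mul_const _]
  simp only [integral_mul_const, integral_const_mul]

lemma matExp_add {f g : Ω → Matrix (Fin m) (Fin n) ℝ}
    (hf : ∀ i j, Integrable (fun ω => f ω i j) μ)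
    (hg : ∀ i j, Integrable (fun ω => g ω i j) μ) :
    matExp μ (fun ω => f ω + g ω) = matExp μ f + matExp μ g := by
  ext i j
  exact integral_add (hf i j) (hg i j)

lemma matExp_sub {f g : Ω → Matrix (Fin m) (Fin n) ℝ}
    (hf : ∀ i j, Integrable (fun ω => f ω i j) μ)
    (hg : ∀ i j, Integrable (fun ω => g ω i j) μ) :
    matExp μ (fun ω => f ω - g ω) = matExp μ f - matExp μ g := by
  ext i j
  exact integral_sub (hf i j) (hg i j)

lemma matExp_const [IsProbabilityMeasure μ] (C : Matrix (Fin m) (Fin n) ℝ) :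
    matExp μ (fun _ => C) = C := by
  ext i j
  simp [matExp]

lemma matExp_add_const [IsProbabilityMeasure μ] {f : Ω → Matrix (Fin m) (Fin n) ℝ}
    (hf : ∀ i j, Integrable (fun ω => f ω i j) μ) (C : Matrix (Fin m) (Fin n) ℝ) :
    matExp μ (fun ω => f ω + C) = matExp μ f + C := by
  rw [matExp_add (g := fun _ => C) hf fun _ _ => integrable_const _, matExp_const]

lemma dotProduct_mulVec_eq_sum (M : Matrix (Fin n) (Fin n) ℝ) (x : Fin n → ℝ) :
    x ⬝ᵥ M *ᵥ x = ∑ i, ∑ j, x i * M i j * x j := by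
  simp only [dotProduct, mulVec, Finset.mul_sum, mul_assoc]

lemma integrable_dotProduct_mulVec {g : Ω → Matrix (Fin n) (Fin n) ℝ}
    (hg : ∀ i j, Integrable (fun ω => g ω i j) μ) (x : Fin n → ℝ) :
    Integrable (fun ω => x ⬝ᵥ g ω *ᵥ x) μ := by
  simp_rw [dotProduct_mulVec_eq_sum]
  exact integrable_finsetSum _ fun i _ => integrable_finsetSum _ fun j _ =>
    ((hg i j).const_mul _).mul_const _

lemma integral_dotProduct_mulVec {g : Ω → Matrix (Fin n) (Fin n) ℝ}
    (hg : ∀ i j, Integrable (fun ω => g ω i j) μ) (x : Fin n → ℝ) :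
    ∫ ω, x ⬝ᵥ g ω *ᵥ x ∂μ = x ⬝ᵥ matExp μ g *ᵥ x := by
  simp_rw [dotProduct_mulVec_eq_sum]
  rw [integral_finsetSum _ fun i _ => integrable_finsetSum _ fun j _ =>
    ((hg i j).const_mul _).mul_const _]
  refine Finset.sum_congr rfl fun i _ => ?_
  rw [integral_finsetSum _ fun j _ => ((hg i j).const_mul _).mul_const _]
  simp only [integral_mul_const, integral_const_mul, matExp, of_apply]

lemma matExp_isHermitian {g : Ω → Matrix (Fin n) (Fin n) ℝ}
    (hg : ∀ᵐ ω ∂μ, (g ω).IsHermitian) : (matExp μ g).IsHermitian := by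
  refine IsHermitian.ext fun i j => ?_
  simp only [matExp, of_apply, star_trivial]
  exact integral_congr_ae <| hg.mono fun ω h => by simpa using h.apply i j

lemma matExp_posSemidef {g : Ω → Matrix (Fin n) (Fin n) ℝ}
    (hg : ∀ i j, Integrable (fun ω => g ω i j) μ) (hpsd : ∀ᵐ ω ∂μ, (g ω).PosSemidef) :
    (matExp μ g).PosSemidef := by
  refine .of_dotProduct_mulVec_nonneg (matExp_isHermitian (hpsd.mono fun _ h => h.isHermitian))
    fun x => ?_
  rw [star_trivial, ← integral_dotProduct_mulVec hg x]
  exact integral_nonneg_of_ae <| hpsd.mono fun ω h => by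
    simpa using h.dotProduct_mulVec_nonneg x

lemma matExp_posDef [IsProbabilityMeasure μ] {g : Ω → Matrix (Fin n) (Fin n) ℝ}
    (hg : ∀ i j, Integrable (fun ω => g ω i j) μ) (hpd : ∀ᵐ ω ∂μ, (g ω).PosDef) :
    (matExp μ g).PosDef := by
  refine .of_dotProduct_mulVec_pos (matExp_isHermitian (hpd.mono fun _ h => h.isHermitian))
    fun x hx => ?_
  have hpos : ∀ᵐ ω ∂μ, 0 < x ⬝ᵥ g ω *ᵥ x := hpd.mono fun ω h => by
    simpa using h.dotProduct_mulVec_pos hx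
  rw [star_trivial, ← integral_dotProduct_mulVec hg x, integral_pos_iff_support_of_nonneg_ae
    (hpos.mono fun _ h => h.le) (integrable_dotProduct_mulVec hg x), pos_iff_ne_zero, Ne,
    measure_eq_zero_iff_ae_notMem]
  intro hzero
  obtain ⟨ω, hω, hω'⟩ := (hpos.and hzero).exists
  exact hω' hω.ne'

end Expectation

section Riccati
variable {Ω : Type} [MeasurableSpace Ω] {μ : Measure Ω} {d : ℕ}
  {S : Matrix (Fin d) (Fin d) ℝ} {p : Ω → Matrix (Fin d) (Fin d) ℝ}

lemma integrable_one_add_mul_inv_mul_apply (hS : S.PosDef) (hpd : ∀ᵐ ω ∂μ, (p ω).PosDef)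
    (hp : ∀ i j, Integrable (fun ω => p ω i j) μ) (k l : Fin d) :
    Integrable (fun ω => ((1 + p ω * S)⁻¹ * p ω) k l) μ := by
  have hmeas : ∀ i j, AEMeasurable (fun ω => p ω i j) μ := fun i j => (hp i j).aemeasurable
  have hinv : ∀ i j, AEMeasurable (fun ω => (1 + p ω * S)⁻¹ i j) μ := by
    refine aemeasurable_inv_apply fun i j => aemeasurable_const.add ?_
    simp only [mul_apply]
    exact Finset.aemeasurable_fun_sum _ fun k _ => (hmeas i k).mul_const _
  refine (((hp k k).add (hp l l)).div_const 2).mono' ?_ ?_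
  · simp only [mul_apply]
    exact (Finset.aemeasurable_fun_sum _ fun i _ =>
      (hinv k i).mul (hmeas i l)).aestronglyMeasurable
  filter_upwards [hpd] with ω hω
  have hle := posSemidef_sub_one_add_mul_inv_mul hS hω.posSemidef
  rw [Real.norm_eq_abs, Pi.add_apply]
  refine ((posDef_one_add_mul_inv_mul hS.posSemidef hω).posSemidef.abs_apply_le k l).trans ?_
  have hk := hle.diag_nonneg (i := k)
  have hl := hle.diag_nonneg (i := l)
  simp only [Matrix.sub_apply] at hk hl
  linarith

lemma integrable_riccatiMajorant_apply [IsFiniteMeasure μ] (K : Matrix (Fin d) (Fin d) ℝ)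
    (hp : ∀ i j, Integrable (fun ω => p ω i j) μ) (i j : Fin d) :
    Integrable (fun ω => riccatiMajorant S K (p ω) i j) μ := by
  simp only [riccatiMajorant, Matrix.add_apply]
  exact (integrable_mul_mul_apply _ _ hp i j).add (integrable_const _)

lemma matExp_riccatiMajorant [IsProbabilityMeasure μ] (K : Matrix (Fin d) (Fin d) ℝ)
    (hp : ∀ i j, Integrable (fun ω => p ω i j) μ) :
    matExp μ (fun ω => riccatiMajorant S K (p ω)) = riccatiMajorant S K (matExp μ p) := by
  simp only [riccatiMajorant]
  rw [matExp_add_const (integrable_mul_mul_apply _ _ hp), matExp_mul_mul _ _ hp]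

theorem matExp_one_add_mul_inv_mul_le [IsProbabilityMeasure μ] (hS : S.PosDef)
    (hpd : ∀ᵐ ω ∂μ, (p ω).PosDef) (hp : ∀ i j, Integrable (fun ω => p ω i j) μ) :
    ((1 + matExp μ p * S)⁻¹ * matExp μ p -
      matExp μ (fun ω => (1 + p ω * S)⁻¹ * p ω)).PosSemidef := by
  set Q := matExp μ p
  set K := Q * (Q + S⁻¹)⁻¹
  have hg := integrable_one_add_mul_inv_mul_apply hS hpd hp
  rw [← riccatiMajorant_optimal_eq hS (matExp_posDef hp hpd).posSemidef,
    ← matExp_riccatiMajorant K hp, ← matExp_sub (integrable_riccatiMajorant_apply K hp) hg]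
  refine matExp_posSemidef (fun i j => (integrable_riccatiMajorant_apply K hp i j).sub (hg i j)) ?_
  filter_upwards [hpd] with ω hω
  exact posSemidef_riccatiMajorant_sub hS hω.posSemidef K

end Riccati

theorem statement14_general {d : ℕ}
    (A : Matrix (Fin d) (Fin d) ℝ)
    (R : Matrix (Fin d) (Fin d) ℝ)
    (S : Matrix (Fin d) (Fin d) ℝ) (hS : S.PosDef)
    (Φ : Matrix (Fin d) (Fin d) ℝ → Matrix (Fin d) (Fin d) ℝ)
    (hΦ : ∀ Q, Φ Q = A * (1 + Q * S)⁻¹ * Q * Aᵀ + R)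
    (Ω : Type) [MeasurableSpace Ω] (μ : Measure Ω) [IsProbabilityMeasure μ]
    (p : Ω → Matrix (Fin d) (Fin d) ℝ)
    (hpd : ∀ᵐ ω ∂μ, (p ω).PosDef)
    (hint : ∀ i j, Integrable (fun ω => p ω i j) μ) :
    (matExp μ p).PosDef ∧
    (A * (1 + matExp μ p * S)⁻¹ * matExp μ p * Aᵀ -
      matExp μ (fun ω => A * (1 + p ω * S)⁻¹ * p ω * Aᵀ)).PosSemidef ∧
    (Φ (matExp μ p) - matExp μ (fun ω => Φ (p ω))).PosSemidef := by
  have hassoc (Q : Matrix (Fin d) (Fin d) ℝ) :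
      A * (1 + Q * S)⁻¹ * Q * Aᵀ = A * ((1 + Q * S)⁻¹ * Q) * Aᵀ := by rw [mul_assoc A]
  have hg := integrable_one_add_mul_inv_mul_apply hS hpd hint
  have hjensen : (A * (1 + matExp μ p * S)⁻¹ * matExp μ p * Aᵀ -
      matExp μ (fun ω => A * (1 + p ω * S)⁻¹ * p ω * Aᵀ)).PosSemidef := by
    simp_rw [hassoc]
    rw [matExp_mul_mul _ _ hg, ← sub_mul, ← mul_sub]
    simpa using (matExp_one_add_mul_inv_mul_le hS hpd hint).mul_mul_conjTranspose_same A
  refine ⟨matExp_posDef hint hpd, hjensen, ?_⟩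
  simp_rw [hΦ]
  rw [matExp_add_const fun i j => by
      simpa only [hassoc] using integrable_mul_mul_apply A Aᵀ hg i j,
    add_sub_add_right_eq_sub]
  exact hjensen

/-- Assume `S := Bᵀ R₀⁻¹ B` is positive definite.  Let `p` be a
random `d×d` matrix, almost surely positive definite with integrable entries.  Then
`E[p]` is positive definite and `E[A (I + p S)⁻¹ p Aᵀ] ≤ A (I + E[p] S)⁻¹ E[p] Aᵀ` in
the Loewner order; consequently `E[Φ(p)] ≤ Φ(E[p])` for the Riccati map
`Φ(P) := A (I + P S)⁻¹ P Aᵀ + R`. -/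
theorem statement14 {d d₀ : ℕ} (hd : 1 ≤ d) (hd₀ : 1 ≤ d₀)
    (A : Matrix (Fin d) (Fin d) ℝ) (B : Matrix (Fin d₀) (Fin d) ℝ)
    (R : Matrix (Fin d) (Fin d) ℝ) (R₀ : Matrix (Fin d₀) (Fin d₀) ℝ)
    (hR : R.PosDef) (hR₀ : R₀.PosDef)
    (S : Matrix (Fin d) (Fin d) ℝ) (hSdef : S = Bᵀ * R₀⁻¹ * B) (hS : S.PosDef)
    (Φ : Matrix (Fin d) (Fin d) ℝ → Matrix (Fin d) (Fin d) ℝ)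
    (hΦ : ∀ Q, Φ Q = A * (1 + Q * S)⁻¹ * Q * Aᵀ + R)
    (Ω : Type) [MeasurableSpace Ω] (μ : Measure Ω) [IsProbabilityMeasure μ]
    (p : Ω → Matrix (Fin d) (Fin d) ℝ) (hmeas : ∀ i j, Measurable (fun ω => p ω i j))
    (hpd : ∀ᵐ ω ∂μ, (p ω).PosDef)
    (hint : ∀ i j, Integrable (fun ω => p ω i j) μ) :
    (matExp μ p).PosDef ∧
    (A * (1 + matExp μ p * S)⁻¹ * matExp μ p * Aᵀ -
      matExp μ (fun ω => A * (1 + p ω * S)⁻¹ * p ω * Aᵀ)).PosSemidef ∧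
    (Φ (matExp μ p) - matExp μ (fun ω => Φ (p ω))).PosSemidef :=
  statement14_general A R S hS Φ hΦ Ω μ p hpd hint
end
end
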